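/- If g, h : C → C are chain homotopic self-maps of an R-module chain complex C, then the algebraic mapping tori T(g) and T(h) are isomorphic as R[x,x⁻¹]-module chain complexes. -/

import Mathlib

open CategoryTheory LaurentPolynomial

/-- Degreewise scalar multiplication by `a` as a chain self-map. -/
def smulChainMap {A : Type*} [CommRing A] {ι : Type*} {c : ComplexShape ι} (a : A)
    (K : HomologicalComplex (ModuleCat A) c) : K ⟶ K where
  f n := ModuleCat.ofHom (a • LinearMap.id)
  comm' := by
    intro i j _
    ext x
    show (K.d i j) (a • x) = a • (K.d i j) x
    exact (K.d i j).hom.map_smul a x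

/-- The algebraic mapping torus `T(h) = Cone(h⊗1 − 1⊗x)` of a self-map `h` of a complex
of `R`-modules, a complex of `R[x,x⁻¹]`-modules. -/
noncomputable def mappingTorus {R : Type*} [CommRing R] {C : CochainComplex (ModuleCat R) ℤ}
    (h : C ⟶ C) : CochainComplex (ModuleCat (LaurentPolynomial R)) ℤ :=
  CochainComplex.mappingCone
    (((ModuleCat.extendScalars (algebraMap R (LaurentPolynomial R))).mapHomologicalComplex
        (ComplexShape.up ℤ)).map h - smulChainMap (T 1) _)

/-! A homotopy `A : φ₁ ≃ φ₂` makes the square `φ₁ ≫ 𝟙 ≃ 𝟙 ≫ φ₂` commute up to homotopy; the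
induced map of cones is the matrix `[[1, 0], [A, 1]]`, and the one induced by `-A` inverts it.
Base change to `R[x,x⁻¹]` is additive, so it carries `g ≃ h` to a homotopy between
`g ⊗ 1 - 1 ⊗ x` and `h ⊗ 1 - 1 ⊗ x`. -/

universe u v w in
instance ModuleCat.extendScalars_additive {R : Type u} {S : Type v} [CommRing R] [CommRing S]
    (f : R →+* S) : (ModuleCat.extendScalars.{u, v, max v w} f).Additive :=
  have : Limits.PreservesBinaryBiproducts (ModuleCat.extendScalars f) :=
    Limits.preservesBinaryBiproducts_of_preservesBinaryCoproducts _
  Functor.additive_of_preservesBinaryBiproducts _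

namespace Homotopy

variable {ι V : Type*} [Category V] [Preadditive V] {c : ComplexShape ι}
  {K L : HomologicalComplex V c}

def subRight {f g : K ⟶ L} (H : Homotopy f g) (k : K ⟶ L) : Homotopy (f - k) (g - k) where
  hom := H.hom
  zero := H.zero
  comm i := by
    rw [HomologicalComplex.sub_f_apply, HomologicalComplex.sub_f_apply, H.comm i]
    abel

def compIdIdComp {f g : K ⟶ L} (H : Homotopy f g) : Homotopy (f ≫ 𝟙 L) (𝟙 K ≫ g) :=
  ((ofEq (Category.comp_id f)).trans H).trans (ofEq (Category.id_comp g).symm)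

end Homotopy

namespace CochainComplex.mappingCone

variable {V : Type*} [Category V] [Preadditive V] [Limits.HasBinaryBiproducts V]
  {K L : CochainComplex V ℤ} {φ₁ φ₂ : K ⟶ L}

lemma mapOfHomotopy_comp_mapOfHomotopy_of_add_eq_zero (H : Homotopy φ₁ φ₂)
    (H' : Homotopy φ₂ φ₁) (hH : ∀ i j, H.hom i j + H'.hom i j = 0) :
    mapOfHomotopy H.compIdIdComp ≫ mapOfHomotopy H'.compIdIdComp = 𝟙 _ := by
  ext p
  rw [ext_from_iff _ (p + 1) p rfl]
  constructor
  · simp only [mapOfHomotopy, Homotopy.compIdIdComp, HomComplex.Cochain.ofHomotopy,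
      HomComplex.Cochain.equivHomotopy_apply_coe, HomComplex.Cochain.id_comp,
      HomComplex.Cochain.add_v, HomComplex.Cochain.comp_zero_cochain_v, HomComplex.Cochain.mk_v,
      HomComplex.Cochain.ofHom_v, Homotopy.trans_hom, Homotopy.ofEq_hom, Pi.zero_apply, zero_add,
      add_zero, Category.id_comp, Category.comp_id, Category.assoc, HomologicalComplex.comp_f,
      HomologicalComplex.id_f, inl_v_desc_f_assoc, inl_v_desc_f, inr_f_desc_f,
      Preadditive.add_comp]
    rw [add_assoc, ← Preadditive.add_comp, add_comm (H'.hom _ _), hH, Limits.zero_comp, add_zero]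
  · simp [mapOfHomotopy, Homotopy.compIdIdComp]

noncomputable def isoOfHomotopy (H : Homotopy φ₁ φ₂) : mappingCone φ₁ ≅ mappingCone φ₂ where
  hom := mapOfHomotopy H.compIdIdComp
  inv := mapOfHomotopy H.symm.compIdIdComp
  hom_inv_id := mapOfHomotopy_comp_mapOfHomotopy_of_add_eq_zero H H.symm (by simp [Homotopy.symm])
  inv_hom_id := mapOfHomotopy_comp_mapOfHomotopy_of_add_eq_zero H.symm H (by simp [Homotopy.symm])

end CochainComplex.mappingCone

/-- If `g, h : C → C` are chain homotopic self-maps of an `R`-module chain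
complex, then the algebraic mapping tori `T(g)` and `T(h)` are isomorphic as
`R[x,x⁻¹]`-module chain complexes. -/
theorem stmt6 (R : Type*) [CommRing R] (C : CochainComplex (ModuleCat R) ℤ)
    (g h : C ⟶ C) (H : Homotopy g h) :
    Nonempty (mappingTorus g ≅ mappingTorus h) :=
  ⟨CochainComplex.mappingCone.isoOfHomotopy
    (((ModuleCat.extendScalars (algebraMap R R[T;T⁻¹])).mapHomotopy H).subRight _)⟩
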